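/- In the contact Hamilton–Jacobi setting, if a section σ of Π satisfies (Im σ_*)^⊥ ∩ Ker η ⊆ Im σ_* (where ⊥ is dη-orthogonal), then σ solves the Π-Hamilton–Jacobi equation for X_H if and only if i_{X_H^σ} σ* dη = σ*(ξ(H) η − dH) and i_{X_H^σ} σ* η = σ* H. -/

import Mathlib

open scoped Manifold

/-! Since `proj ∘ σ = id`, the differential `σ_*` is injective with left inverse `proj_*`.
The two conditions say that `v := σ_* X_H^σ - X_H ∘ σ` is `dη`-orthogonal to `Im σ_*` and lies in
`Ker η`, so `v ∈ Im σ_*` by hypothesis; as `proj_* v = 0` and `proj_*` is injective on `Im σ_*`,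
`v = 0`. -/

theorem mfderiv_apply_mfderiv_of_leftInverse
    {𝕜 : Type*} [NontriviallyNormedField 𝕜]
    {E : Type*} [NormedAddCommGroup E] [NormedSpace 𝕜 E]
    {HM : Type*} [TopologicalSpace HM] {I : ModelWithCorners 𝕜 E HM}
    {M : Type*} [TopologicalSpace M] [ChartedSpace HM M]
    {F : Type*} [NormedAddCommGroup F] [NormedSpace 𝕜 F]
    {HN : Type*} [TopologicalSpace HN] {J : ModelWithCorners 𝕜 F HN}
    {N : Type*} [TopologicalSpace N] [ChartedSpace HN N]
    {f : M → N} {g : N → M} (hfg : Function.LeftInverse f g) {q : N}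
    (hf : MDifferentiableAt I J f (g q)) (hg : MDifferentiableAt J I g q)
    (u : TangentSpace J q) :
    mfderiv I J f (g q) (mfderiv J I g q u) = u := by
  rw [← mfderiv_comp_apply q hf hg, hfg.comp_eq_id, mfderiv_id]
  rfl

theorem LinearMap.apply_apply_eq_self_iff_of_coisotropic
    {R V W : Type*} [CommRing R] [AddCommGroup V] [Module R V] [AddCommGroup W] [Module R W]
    (s : W →ₗ[R] V) (π : V →ₗ[R] W) (hπs : ∀ u, π (s u) = u)
    (ω : V →ₗ[R] V →ₗ[R] R) (η : V →ₗ[R] R)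
    (hco : ∀ v, (∀ u, ω v (s u) = 0) → η v = 0 → v ∈ LinearMap.range s) (x : V) :
    s (π x) = x ↔ (∀ u, ω (s (π x)) (s u) = ω x (s u)) ∧ η (s (π x)) = η x := by
  refine ⟨fun h => by simp [h], fun ⟨hω, hη⟩ => ?_⟩
  obtain ⟨u, hu⟩ := hco (s (π x) - x) (fun u => by simp [hω]) (by simp [hη])
  have hu0 : u = 0 := by simpa [hπs] using congrArg π hu
  rw [← sub_eq_zero, ← hu, hu0, map_zero]

theorem stmt_9_general
    {E : Type*} [NormedAddCommGroup E] [NormedSpace ℝ E]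
    {HM : Type*} [TopologicalSpace HM]
    (I : ModelWithCorners ℝ E HM)
    {M : Type*} [TopologicalSpace M] [ChartedSpace HM M]
    -- the contact form and its exterior differential, as pointwise (bi)linear forms
    (η : (p : M) → TangentSpace I p →L[ℝ] ℝ)
    (dη : (p : M) → TangentSpace I p →L[ℝ] TangentSpace I p →L[ℝ] ℝ)
    -- the Hamiltonian function, its differential, `ξ(H)`, and the contact field `X_H`
    (H : M → ℝ)
    (dH : (p : M) → TangentSpace I p →L[ℝ] ℝ)
    (ξH : M → ℝ)
    (XH : (p : M) → TangentSpace I p)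
    (hXH1 : ∀ p (w : TangentSpace I p), dη p (XH p) w = - dH p w + ξH p * η p w)
    (hXH2 : ∀ p, η p (XH p) = H p)
    -- the fibration
    {F : Type*} [NormedAddCommGroup F] [NormedSpace ℝ F]
    {HN : Type*} [TopologicalSpace HN]
    (J : ModelWithCorners ℝ F HN)
    {N : Type*} [TopologicalSpace N] [ChartedSpace HN N]
    (proj : M → N) (hproj : ContMDiff I J (⊤ : ℕ∞) proj)
    -- a section of the fibration and the projected field `X_H^σ := proj_* ∘ X_H ∘ σ`
    (σ : N → M) (hσ : ContMDiff J I (⊤ : ℕ∞) σ)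
    (hsec : ∀ q, proj (σ q) = q)
    (XHσ : (q : N) → TangentSpace J q)
    (hXHσ : ∀ q, XHσ q = mfderiv I J proj (σ q) (XH (σ q)))
    -- (Im σ_*)^⊥ ∩ Ker η ⊆ Im σ_*
    (hco : ∀ q (v : TangentSpace I (σ q)),
      (∀ u : TangentSpace J q, dη (σ q) v (mfderiv J I σ q u) = 0) →
      η (σ q) v = 0 → v ∈ Set.range (mfderiv J I σ q)) :
    (∀ q, mfderiv J I σ q (XHσ q) = XH (σ q)) ↔
      ((∀ q (v : TangentSpace J q),
      dη (σ q) (mfderiv J I σ q (XHσ q)) (mfderiv J I σ q v) =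
        ξH (σ q) * η (σ q) (mfderiv J I σ q v) - dH (σ q) (mfderiv J I σ q v)) ∧
       (∀ q, η (σ q) (mfderiv J I σ q (XHσ q)) = H (σ q))) := by
  rw [← forall_and]
  refine forall_congr' fun q => ?_
  have hsplit := (mfderiv J I σ q).toLinearMap.apply_apply_eq_self_iff_of_coisotropic
    (mfderiv I J proj (σ q)).toLinearMap
    (mfderiv_apply_mfderiv_of_leftInverse hsec (hproj.mdifferentiableAt (by simp))
      (hσ.mdifferentiableAt (by simp)))
    (dη (σ q)).toLinearMap₁₂ (η (σ q)).toLinearMap (hco q) (XH (σ q))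
  simp only [ContinuousLinearMap.coe_coe, ContinuousLinearMap.toLinearMap₁₂_apply_apply_apply,
    hXH1, hXH2, neg_add_eq_sub] at hsplit
  rw [hXHσ]
  exact hsplit

/-- If a section `σ` satisfies `(Im σ_*)^⊥ ∩ Ker η ⊆ Im σ_*` (`dη`-orthogonal),
then `σ` solves the Π-Hamilton–Jacobi equation for `X_H` iff
`i_{X_H^σ} σ*dη = σ*(ξ(H) η − dH)` and `i_{X_H^σ} σ*η = σ*H`. -/
theorem stmt_9
    {n : ℕ}
    {E : Type*} [NormedAddCommGroup E] [NormedSpace ℝ E] [FiniteDimensional ℝ E]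
    {HM : Type*} [TopologicalSpace HM]
    (I : ModelWithCorners ℝ E HM)
    {M : Type*} [TopologicalSpace M] [ChartedSpace HM M] [IsManifold I (⊤ : ℕ∞) M]
    (hdim : Module.finrank ℝ E = 2 * n + 1)
    -- the contact form and its exterior differential, as pointwise (bi)linear forms
    (η : (p : M) → TangentSpace I p →L[ℝ] ℝ)
    (dη : (p : M) → TangentSpace I p →L[ℝ] TangentSpace I p →L[ℝ] ℝ)
    (hskew : ∀ p (v w : TangentSpace I p), dη p v w = - dη p w v)
    -- contact condition: `(dη)^n ∧ η` is a volume form, encoded as `Ker η_p ∩ Ker dη_p = 0`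
    (hcontact : ∀ p (v : TangentSpace I p),
      η p v = 0 → (∀ w, dη p v w = 0) → v = 0)
    -- the Reeb vector field
    (ξ : (p : M) → TangentSpace I p)
    (hξ1 : ∀ p (w : TangentSpace I p), dη p (ξ p) w = 0)
    (hξ2 : ∀ p, η p (ξ p) = 1)
    -- the Hamiltonian function, its differential, `ξ(H)`, and the contact field `X_H`
    (H : M → ℝ) (hH : ContMDiff I 𝓘(ℝ, ℝ) (⊤ : ℕ∞) H)
    (dH : (p : M) → TangentSpace I p →L[ℝ] ℝ)
    (hdH : ∀ p, dH p = mfderiv I 𝓘(ℝ, ℝ) H p)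
    (ξH : M → ℝ) (hξH : ∀ p, ξH p = dH p (ξ p))
    (XH : (p : M) → TangentSpace I p)
    (hXH1 : ∀ p (w : TangentSpace I p), dη p (XH p) w = - dH p w + ξH p * η p w)
    (hXH2 : ∀ p, η p (XH p) = H p)
    -- the fibration
    {F : Type*} [NormedAddCommGroup F] [NormedSpace ℝ F] [FiniteDimensional ℝ F]
    {HN : Type*} [TopologicalSpace HN]
    (J : ModelWithCorners ℝ F HN)
    {N : Type*} [TopologicalSpace N] [ChartedSpace HN N] [IsManifold J (⊤ : ℕ∞) N]
    (proj : M → N) (hproj : ContMDiff I J (⊤ : ℕ∞) proj)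
    (hsurj : Function.Surjective proj)
    (hsubm : ∀ p : M, Function.Surjective (mfderiv I J proj p))
    -- a section of the fibration and the projected field `X_H^σ := proj_* ∘ X_H ∘ σ`
    (σ : N → M) (hσ : ContMDiff J I (⊤ : ℕ∞) σ)
    (hsec : ∀ q, proj (σ q) = q)
    (XHσ : (q : N) → TangentSpace J q)
    (hXHσ : ∀ q, XHσ q = mfderiv I J proj (σ q) (XH (σ q)))
    -- (Im σ_*)^⊥ ∩ Ker η ⊆ Im σ_*
    (hco : ∀ q (v : TangentSpace I (σ q)),
      (∀ u : TangentSpace J q, dη (σ q) v (mfderiv J I σ q u) = 0) →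
      η (σ q) v = 0 → v ∈ Set.range (mfderiv J I σ q)) :
    (∀ q, mfderiv J I σ q (XHσ q) = XH (σ q)) ↔
      ((∀ q (v : TangentSpace J q),
      dη (σ q) (mfderiv J I σ q (XHσ q)) (mfderiv J I σ q v) =
        ξH (σ q) * η (σ q) (mfderiv J I σ q v) - dH (σ q) (mfderiv J I σ q v)) ∧
       (∀ q, η (σ q) (mfderiv J I σ q (XHσ q)) = H (σ q))) :=
  stmt_9_general I η dη H dH ξH XH hXH1 hXH2 J proj hproj σ hσ hsec XHσ hXHσ hco
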